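/- Let K be a field containing a primitive 6th root of unity ζ, and let α ∈ K be such that the Weierstrass curve E(α + α², α) : y² + (1 − α)xy − (α + α²)y = x³ − (α + α²)x² over K is nonsingular (i.e., its discriminant is nonzero). Then the point P = (0, 0) lies on the curve, has exact order 6 in the group of points, and ∑_{j=1}^{5} ζ^j x(jP) = −α(α + 2), where x(jP) denotes the x-coordinate of the point jP (which is an affine point for 1 ≤ j ≤ 5 since P has order 6). -/

import Mathlib

/-!
In Tate normal form `E(b, c)` the point `P = (0, 0)` has `2P = (b, bc)` and `3P = (c, b - c)`.
When `b = c + c²` the point `3P` is its own negative, so `P` has order `6`, and `4P = -2P`,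
`5P = -P` share their `x`-coordinates with `2P` and `P`. Since `ζ + ζ⁵ = 1`, `ζ² + ζ⁴ = -1` and
`ζ³ = -1` for a primitive sixth root of unity, the character sum collapses to
`x(P) - x(2P) - x(3P) = 0 - (α + α²) - α`.
-/

/-- The `x`-coordinate of a nonsingular rational point on a Weierstrass curve
(with the point at infinity sent to `0`). -/
noncomputable def ptX {K : Type*} [Field K] {W : WeierstrassCurve.Affine K} : W.Point → K
  | .zero => 0
  | .some x _ _ => x

open WeierstrassCurve.Affine WeierstrassCurve.Affine.Point

section

variable {K : Type*} [Field K]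

@[simp]
lemma ptX_neg {W : WeierstrassCurve.Affine K} (Q : W.Point) :
    ptX (-Q) = ptX Q := by
  cases Q <;> rfl

lemma IsPrimitiveRoot.sum_Icc_pow_mul_ptX_nsmul [DecidableEq K] {W : WeierstrassCurve.Affine K}
    {ζ : K} (hζ : IsPrimitiveRoot ζ 6) {Q : W.Point} (hQ : 6 • Q = 0) :
    ∑ j ∈ Finset.Icc 1 5, ζ ^ j * ptX (j • Q) = ptX Q - ptX (2 • Q) - ptX (3 • Q) := by
  have hsq : ζ ^ 4 + ζ ^ 2 + 1 = 0 := by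
    simpa [Finset.sum_range_succ, ← pow_mul, add_comm, add_left_comm, add_assoc] using
      (hζ.pow (by norm_num) (show 6 = 2 * 3 from rfl)).geom_sum_eq_zero (by norm_num)
  have hcube : ζ ^ 3 = -1 :=
    (hζ.pow (by norm_num) (show 6 = 3 * 2 from rfl)).eq_neg_one_of_two_right
  have h4 : (4 : ℕ) • Q = -((2 : ℕ) • Q) := eq_neg_of_add_eq_zero_left (by rw [← add_nsmul, hQ])
  have h5 : (5 : ℕ) • Q = -Q := eq_neg_of_add_eq_zero_left (by rw [← succ_nsmul, hQ])
  simp only [show Finset.Icc 1 5 = {1, 2, 3, 4, 5} from rfl, Finset.mem_insert,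
    OfNat.one_ne_ofNat, Finset.mem_singleton, or_self, not_false_eq_true, Finset.sum_insert,
    pow_one, one_smul, Nat.reduceEqDiff, h4, ptX_neg, Finset.sum_singleton, h5]
  linear_combination (ptX (2 • Q) - ptX Q) * hsq + (ptX (3 • Q) + ptX Q * (ζ ^ 2 + ζ)) * hcube

lemma WeierstrassCurve.Affine.Point.exists_some_eq_some {W : WeierstrassCurve.Affine K}
    {x y x' y' : K} (h : W.Nonsingular x y) (hx : x = x') (hy : y = y') :
    ∃ h' : W.Nonsingular x' y', some _ _ h = some _ _ h' := by
  subst hx hy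
  exact ⟨h, rfl⟩

namespace WeierstrassCurve

/-- The curve `E(b, c)` in Tate normal form. -/
def tateNormal (b c : K) : WeierstrassCurve.Affine K :=
  { a₁ := 1 - c, a₂ := -b, a₃ := -b, a₄ := 0, a₆ := 0 }

lemma Δ_tateNormal_zero (c : K) : (tateNormal 0 c).Δ = 0 := by
  simp only [tateNormal, Δ, b₂, b₄, b₆, b₈]
  ring

variable {b c : K}

lemma nonsingular_tateNormal_zero_zero (hb : b ≠ 0) : (tateNormal b c).Nonsingular 0 0 := by
  simp [tateNormal, hb]

variable [DecidableEq K]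

lemma two_nsmul_tateNormal (hb : b ≠ 0) :
    ∃ h : (tateNormal b c).Nonsingular b (b * c),
      2 • some _ _ (nonsingular_tateNormal_zero_zero hb) = some _ _ h := by
  have hy : (0 : K) ≠ (tateNormal b c).negY 0 0 := by
    simpa [tateNormal] using hb.symm
  have hℓ : (tateNormal b c).slope 0 0 0 0 = 0 := by
    rw [slope_of_Y_ne rfl hy]
    simp [tateNormal]
  rw [two_nsmul, add_of_Y_ne hy]
  refine exists_some_eq_some _ ?_ ?_ <;> simp only [addY, negAddY, negY, addX, hℓ] <;>
    simp only [tateNormal] <;> ring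

lemma three_nsmul_tateNormal (hb : b ≠ 0) :
    ∃ h : (tateNormal b c).Nonsingular c (b - c),
      3 • some _ _ (nonsingular_tateNormal_zero_zero hb) = some _ _ h := by
  obtain ⟨_, h2P⟩ := two_nsmul_tateNormal (c := c) hb
  have hℓ : (tateNormal b c).slope b 0 (b * c) 0 = c := by
    rw [slope_of_X_ne hb]
    field_simp
    ring
  rw [succ_nsmul, h2P, add_of_X_ne hb]
  refine exists_some_eq_some _ ?_ ?_ <;> simp only [addY, negAddY, negY, addX, hℓ] <;>
    simp only [tateNormal] <;> ring

lemma six_nsmul_tateNormal (hb : b ≠ 0) (hbc : b = c + c ^ 2) :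
    6 • some _ _ (nonsingular_tateNormal_zero_zero (c := c) hb) = 0 := by
  obtain ⟨_, h3P⟩ := three_nsmul_tateNormal (c := c) hb
  rw [show 6 = 3 + 3 from rfl, add_nsmul, h3P]
  -- `b = c + c²` says exactly that `3P = (c, b - c)` has `y = negY x y`.
  exact add_self_of_Y_eq (by simp only [negY, tateNormal, hbc]; ring)

lemma addOrderOf_tateNormal (hb : b ≠ 0) (hbc : b = c + c ^ 2) :
    addOrderOf (some _ _ (nonsingular_tateNormal_zero_zero (c := c) hb)) = 6 := by
  refine addOrderOf_eq_of_nsmul_and_div_prime_nsmul (by norm_num) (six_nsmul_tateNormal hb hbc) ?_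
  intro p hp hp6
  obtain rfl | rfl : p = 2 ∨ p = 3 :=
    (hp.dvd_mul.mp (hp6 : p ∣ 2 * 3)).imp (Nat.prime_dvd_prime_iff_eq hp Nat.prime_two).mp
      (Nat.prime_dvd_prime_iff_eq hp Nat.prime_three).mp
  · obtain ⟨h, h3P⟩ := three_nsmul_tateNormal (c := c) hb
    rw [show 6 / 2 = 3 from rfl, h3P]
    exact some_ne_zero h
  · obtain ⟨h, h2P⟩ := two_nsmul_tateNormal (c := c) hb
    rw [show 6 / 3 = 2 from rfl, h2P]
    exact some_ne_zero h

end WeierstrassCurve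

end

open WeierstrassCurve

open Classical in
/-- **The `m = 6` family of Table 2.** On the nonsingular Weierstrass curve
`E(α + α², α) : y² + (1 - α)xy - (α + α²)y = x³ - (α + α²)x²` over a field containing a
primitive 6th root of unity `ζ`, the point `P = (0, 0)` is a nonsingular point of exact
order 6, and the character sum `∑_{j=1}^{5} ζ^j x(jP)` equals `-α(α + 2)`. -/
theorem order_six_family_charSum {K : Type*} [Field K] (ζ : K) (hζ : IsPrimitiveRoot ζ 6)
    (α : K) (W : WeierstrassCurve.Affine K)
    (hW : W = { a₁ := 1 - α, a₂ := -(α + α ^ 2), a₃ := -(α + α ^ 2), a₄ := 0, a₆ := 0 })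
    (hΔ : W.Δ ≠ 0) :
    ∃ h : W.Nonsingular 0 0, addOrderOf (WeierstrassCurve.Affine.Point.some _ _ h) = 6 ∧
      ∑ j ∈ Finset.Icc 1 5, ζ ^ j * ptX (j • WeierstrassCurve.Affine.Point.some _ _ h) =
        -(α * (α + 2)) := by
  obtain rfl : W = tateNormal (α + α ^ 2) α := hW
  have hb : α + α ^ 2 ≠ 0 := fun hb => hΔ (by rw [hb, Δ_tateNormal_zero])
  refine ⟨nonsingular_tateNormal_zero_zero hb, addOrderOf_tateNormal hb rfl, ?_⟩
  obtain ⟨_, h2P⟩ := two_nsmul_tateNormal (c := α) hb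
  obtain ⟨_, h3P⟩ := three_nsmul_tateNormal (c := α) hb
  rw [hζ.sum_Icc_pow_mul_ptX_nsmul (six_nsmul_tateNormal hb rfl), h2P, h3P]
  simp only [ptX]
  ring
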